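/- Let T and T′ be pretriangulated categories admitting arbitrary (small) coproducts, and let G be a small weak generator of T. Let F₁, F₂ : T → T′ be triangulated functors that preserve arbitrary coproducts, and let τ : F₁ ⟶ F₂ be a natural transformation compatible with the shift (i.e., commuting with the shift-comparison isomorphisms of F₁ and F₂). If the component τ_G is an isomorphism, then τ_X is an isomorphism for every object X of T. -/

import Mathlib

/-!
STATEMENT 1: Let `T` and `T′` be pretriangulated categories admitting arbitrary (small)
coproducts, and let `G` be a small weak generator of `T`. Let `F₁, F₂ : T → T′` be
triangulated functors preserving arbitrary coproducts, and let `τ : F₁ ⟶ F₂` be a natural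
transformation compatible with the shift. If `τ_G` is an isomorphism, then `τ_X` is an
isomorphism for every object `X`.
-/

open CategoryTheory Category Limits Pretriangulated

universe v u

namespace Paper

variable {C : Type u} [Category.{v} C]

/-- The canonical map `⊕ᵢ Hom(G, Aᵢ) →+ Hom(G, ∐ᵢ Aᵢ)`. -/
noncomputable def coproductComparison [Preadditive C] (G : C) {ι : Type v} (A : ι → C)
    [HasCoproduct A] : DirectSum ι (fun i => G ⟶ A i) →+ (G ⟶ ∐ A) :=
  letI := Classical.decEq ι
  DirectSum.toAddMonoid fun i =>
    AddMonoidHom.mk' (fun g => g ≫ Sigma.ι A i) fun _ _ => Preadditive.add_comp _ _ _ _ _ _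

/-- An object `G` is small if for every family of objects admitting a coproduct, the
canonical map `⊕ᵢ Hom(G, Aᵢ) → Hom(G, ∐ᵢ Aᵢ)` is an isomorphism (bijective). -/
def IsSmallObject [Preadditive C] (G : C) : Prop :=
  ∀ ⦃ι : Type v⦄ (A : ι → C) [HasCoproduct A], Function.Bijective (coproductComparison G A)

/-- An object `G` is a weak generator if a map `f : X ⟶ Y` is an isomorphism exactly when
`Hom(G⟦n⟧, X) → Hom(G⟦n⟧, Y)` is bijective for all integers `n`. -/
def IsWeakGenerator [HasShift C ℤ] (G : C) : Prop :=
  ∀ ⦃X Y : C⦄ (f : X ⟶ Y),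
    IsIso f ↔ ∀ n : ℤ, Function.Bijective fun g : G⟦n⟧ ⟶ X => g ≫ f

end Paper

open Paper

/-!
Let `P` be the class of objects `X` with `τ_X` invertible. It contains `G` and is closed under
isomorphisms, shifts, cones and coproducts, so it suffices to show that such a class contains
every object `X`. Starting from `Y₀ = ∐ G⟦n⟧` (one summand for each map `G⟦n⟧ ⟶ X`), build a
tower `Y₀ ⟶ Y₁ ⟶ ⋯` over `X` where `Yᵢ₊₁` is the cone of the sum of all maps `G⟦n⟧ ⟶ Yᵢ` that
vanish in `X`; all `Yᵢ` lie in `P`. The cone `Z` of `𝟙 - shift` on `∐ Yᵢ` lies in `P` and maps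
to `X`. Since `G⟦n⟧` is small, `Hom(G⟦n⟧, ∐ Yᵢ) = ⨁ Hom(G⟦n⟧, Yᵢ)`, on which `1 - shift` is
injective with cokernel `colim Hom(G⟦n⟧, Yᵢ) = Hom(G⟦n⟧, X)`; hence `Z ⟶ X` is bijective on
`Hom(G⟦n⟧, -)` for all `n`, so an isomorphism because `G` is a weak generator.
-/

universe w

open scoped DirectSum

namespace Paper

section SmallObject

variable {C : Type u} [Category.{v} C] [Preadditive C]

lemma coproductComparison_of (G : C) {ι : Type v} [DecidableEq ι] (A : ι → C) [HasCoproduct A]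
    (i : ι) (u : G ⟶ A i) :
    coproductComparison G A (DirectSum.of _ i u) = u ≫ Sigma.ι A i := by
  obtain rfl : ‹DecidableEq ι› = Classical.decEq ι := Subsingleton.elim _ _
  simp [coproductComparison]

theorem IsSmallObject.of_equivalence {D : Type u} [Category.{v} D] [Preadditive D] {G : C}
    (hG : IsSmallObject G) (e : C ≌ D) [e.functor.Additive] :
    IsSmallObject (e.functor.obj G) := by
  intro ι A _
  classical
  have : HasCoproduct fun i => e.inverse.obj (A i) :=
    hasColimit_of_iso (Discrete.compNatIsoDiscrete A e.inverse).symm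
  let adj := e.toAdjunction.homAddEquiv
  have hsquare : (adj G (∐ A)).toAddMonoidHom.comp (coproductComparison _ A) =
      (Preadditive.rightComp G (sigmaComparison e.inverse A)).comp
        ((coproductComparison G _).comp (DirectSum.map fun i => (adj G (A i)).toAddMonoidHom)) := by
    refine DirectSum.addHom_ext fun i u => ?_
    simp [adj, coproductComparison_of, Adjunction.homEquiv_naturality_right, Preadditive.rightComp]
  have hcomp : Function.Bijective (Preadditive.rightComp G (sigmaComparison e.inverse A)) :=
    ⟨fun _ _ h => (cancel_mono _).1 h,
      fun y => ⟨y ≫ inv (sigmaComparison e.inverse A), by simp [Preadditive.rightComp]⟩⟩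
  have hmap : Function.Bijective (DirectSum.map fun i => (adj G (A i)).toAddMonoidHom) :=
    ⟨(DirectSum.map_injective _).2 fun i => (adj G (A i)).injective,
      (DirectSum.map_surjective _).2 fun i => (adj G (A i)).surjective⟩
  refine (Function.Bijective.of_comp_iff' (adj G (∐ A)).bijective _).1 ?_
  have := congrArg DFunLike.coe hsquare
  simp only [AddMonoidHom.coe_comp, AddEquiv.coe_toAddMonoidHom] at this
  rw [this]
  exact hcomp.comp ((hG _).comp hmap)

theorem IsSmallObject.shift [HasShift C ℤ] [∀ n : ℤ, (shiftFunctor C n).Additive] {G : C}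
    (hG : IsSmallObject G) (n : ℤ) : IsSmallObject (G⟦n⟧) :=
  have : (shiftEquiv C n).functor.Additive := inferInstanceAs (shiftFunctor C n).Additive
  hG.of_equivalence (shiftEquiv C n)

end SmallObject

section TelescopeAlgebra

variable {M : ℕ → Type*} [∀ i, AddCommGroup (M i)] (φ : ∀ i, M i →+ M (i + 1))

/-- Indexed by `ULift ℕ` so that it matches sums of `Hom`-groups over coproducts in
`Type v`. -/
noncomputable def telescopeShift :
    (⨁ i : ULift.{w} ℕ, M i.down) →+ ⨁ i : ULift.{w} ℕ, M i.down :=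
  DirectSum.toAddMonoid fun i =>
    (DirectSum.of (fun i : ULift.{w} ℕ => M i.down) ⟨i.down + 1⟩).comp (φ i.down)

@[simp]
lemma telescopeShift_of (i : ℕ) (m : M i) :
    telescopeShift.{w} φ (DirectSum.of _ ⟨i⟩ m) = DirectSum.of _ ⟨i + 1⟩ (φ i m) :=
  DirectSum.toAddMonoid_of _ _ _

lemma telescopeShift_apply_zero (x : ⨁ i : ULift.{w} ℕ, M i.down) :
    telescopeShift φ x ⟨0⟩ = 0 := by
  induction x using DirectSum.induction_on with
  | zero => simp
  | of i m =>
    obtain ⟨i⟩ := i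
    simp [DirectSum.of_eq_of_ne]
  | add x y hx hy => simp [hx, hy]

lemma telescopeShift_apply_succ (x : ⨁ i : ULift.{w} ℕ, M i.down) (j : ℕ) :
    telescopeShift φ x ⟨j + 1⟩ = φ j (x ⟨j⟩) := by
  induction x using DirectSum.induction_on with
  | zero => simp
  | of i m =>
    obtain ⟨i⟩ := i
    obtain rfl | hij := eq_or_ne i j
    · simp
    · simp [DirectSum.of_eq_of_ne, hij.symm]
  | add x y hx hy => simp [hx, hy]

noncomputable def telescopeDiff :
    (⨁ i : ULift.{w} ℕ, M i.down) →+ ⨁ i : ULift.{w} ℕ, M i.down :=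
  AddMonoidHom.id _ - telescopeShift φ

lemma telescopeDiff_apply (x : ⨁ i : ULift.{w} ℕ, M i.down) :
    telescopeDiff φ x = x - telescopeShift φ x :=
  rfl

lemma injective_telescopeDiff : Function.Injective (telescopeDiff.{w} φ) := by
  refine (injective_iff_map_eq_zero _).2 fun x hx => ?_
  rw [telescopeDiff_apply, sub_eq_zero] at hx
  ext ⟨j⟩
  induction j with
  | zero => rw [hx, telescopeShift_apply_zero, DirectSum.zero_apply]
  | succ j ih =>
    rw [DirectSum.zero_apply] at ih ⊢
    rw [hx, telescopeShift_apply_succ, ih, map_zero]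

lemma of_sub_of_succ_mem_range (i : ℕ) (m : M i) :
    DirectSum.of _ ⟨i⟩ m - DirectSum.of _ ⟨i + 1⟩ (φ i m) ∈ (telescopeDiff.{w} φ).range :=
  ⟨DirectSum.of _ ⟨i⟩ m, by simp [telescopeDiff_apply]⟩

lemma exists_sub_of_mem_range_telescopeDiff (x : ⨁ i : ULift.{w} ℕ, M i.down) :
    ∃ N, ∀ n, N ≤ n → ∃ m : M n, x - DirectSum.of _ ⟨n⟩ m ∈ (telescopeDiff φ).range := by
  induction x using DirectSum.induction_on with
  | zero => exact ⟨0, fun n _ => ⟨0, by simp [zero_mem]⟩⟩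
  | of i m =>
    obtain ⟨i⟩ := i
    refine ⟨i, fun n hn => ?_⟩
    induction n, hn using Nat.le_induction with
    | base => exact ⟨m, by simp [zero_mem]⟩
    | succ n _ ih =>
      obtain ⟨m', hm'⟩ := ih
      exact ⟨φ n m', by simpa using add_mem hm' (of_sub_of_succ_mem_range φ n m')⟩
  | add x y hx hy =>
    obtain ⟨N₁, h₁⟩ := hx
    obtain ⟨N₂, h₂⟩ := hy
    refine ⟨max N₁ N₂, fun n hn => ?_⟩
    obtain ⟨m₁, hm₁⟩ := h₁ n (le_of_max_le_left hn)
    obtain ⟨m₂, hm₂⟩ := h₂ n (le_of_max_le_right hn)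
    refine ⟨m₁ + m₂, ?_⟩
    convert add_mem hm₁ hm₂ using 1
    rw [map_add]
    abel

variable {A : Type*} [AddCommGroup A] {ψ : ∀ i, M i →+ A}

lemma toAddMonoid_telescopeDiff (hψ : ∀ i m, ψ (i + 1) (φ i m) = ψ i m)
    (x : ⨁ i : ULift.{w} ℕ, M i.down) :
    DirectSum.toAddMonoid (fun i => ψ i.down) (telescopeDiff φ x) = 0 := by
  induction x using DirectSum.induction_on with
  | zero => simp
  | of i m =>
    obtain ⟨i⟩ := i
    simp [telescopeDiff_apply, hψ]
  | add x y hx hy => simp [hx, hy]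

lemma mem_range_telescopeDiff (hψ : ∀ i m, ψ (i + 1) (φ i m) = ψ i m)
    (hkill : ∀ i m, ψ i m = 0 → φ i m = 0) {x : ⨁ i : ULift.{w} ℕ, M i.down}
    (hx : DirectSum.toAddMonoid (fun i => ψ i.down) x = 0) :
    x ∈ (telescopeDiff φ).range := by
  obtain ⟨N, hN⟩ := exists_sub_of_mem_range_telescopeDiff φ x
  obtain ⟨m, hxm⟩ := hN N le_rfl
  have hm : ψ N m = 0 := by
    obtain ⟨y, hy⟩ := hxm
    have := toAddMonoid_telescopeDiff φ hψ y
    rwa [hy, map_sub, hx, DirectSum.toAddMonoid_of, zero_sub, neg_eq_zero] at this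
  have hof : DirectSum.of _ ⟨N⟩ m ∈ (telescopeDiff φ).range :=
    ⟨DirectSum.of _ ⟨N⟩ m, by simp [telescopeDiff_apply, hkill N m hm]⟩
  simpa using add_mem hxm hof

end TelescopeAlgebra

section Telescope

variable {C : Type u} [Category.{v} C] (Y : ℕ → C) (g : ∀ i, Y i ⟶ Y (i + 1))
  [HasCoproduct fun i : ULift.{v} ℕ => Y i.down]

/-- The cone of `𝟙 - telescopeMap Y g` is the homotopy colimit of the sequence `Y`. -/
noncomputable def telescopeMap :
    (∐ fun i : ULift.{v} ℕ => Y i.down) ⟶ ∐ fun i : ULift.{v} ℕ => Y i.down :=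
  Sigma.desc fun i => g i.down ≫ Sigma.ι (fun i : ULift.{v} ℕ => Y i.down) ⟨i.down + 1⟩

@[simp]
lemma ι_telescopeMap (i : ℕ) :
    Sigma.ι (fun i : ULift.{v} ℕ => Y i.down) ⟨i⟩ ≫ telescopeMap Y g =
      g i ≫ Sigma.ι (fun i : ULift.{v} ℕ => Y i.down) ⟨i + 1⟩ :=
  Sigma.ι_desc _ _

variable [Preadditive C]

lemma one_sub_telescopeMap_comp_desc {X : C} (f : ∀ i, Y i ⟶ X)
    (hf : ∀ i, g i ≫ f (i + 1) = f i) :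
    (𝟙 _ - telescopeMap Y g) ≫ Sigma.desc (fun i : ULift.{v} ℕ => f i.down) = 0 := by
  ext ⟨i⟩
  simp [Preadditive.sub_comp, reassoc_of% ι_telescopeMap, hf]

variable (G : C)

lemma coproductComparison_comp_telescopeMap (x : ⨁ i : ULift.{v} ℕ, G ⟶ Y i.down) :
    coproductComparison G _ x ≫ telescopeMap Y g =
      coproductComparison G _ (telescopeShift (fun i => Preadditive.rightComp G (g i)) x) := by
  classical
  induction x using DirectSum.induction_on with
  | zero => simp
  | of i u =>
    obtain ⟨i⟩ := i
    simp [coproductComparison_of, Preadditive.rightComp]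
  | add x y hx hy => simp [Preadditive.add_comp, hx, hy]

lemma coproductComparison_comp_one_sub_telescopeMap (x : ⨁ i : ULift.{v} ℕ, G ⟶ Y i.down) :
    coproductComparison G _ x ≫ (𝟙 _ - telescopeMap Y g) =
      coproductComparison G _ (telescopeDiff (fun i => Preadditive.rightComp G (g i)) x) := by
  rw [Preadditive.comp_sub, comp_id, coproductComparison_comp_telescopeMap, telescopeDiff_apply,
    map_sub]

lemma coproductComparison_comp_desc {X : C} (f : ∀ i, Y i ⟶ X)
    (x : ⨁ i : ULift.{v} ℕ, G ⟶ Y i.down) :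
    coproductComparison G _ x ≫ Sigma.desc (fun i => f i.down) =
      DirectSum.toAddMonoid (fun i => Preadditive.rightComp G (f i.down)) x := by
  classical
  induction x using DirectSum.induction_on with
  | zero => simp
  | of i u => simp [coproductComparison_of, Preadditive.rightComp]
  | add x y hx hy => simp [Preadditive.add_comp, hx, hy]

variable {G}

lemma eq_zero_of_comp_one_sub_telescopeMap (hG : IsSmallObject G)
    (u : G ⟶ ∐ fun i : ULift.{v} ℕ => Y i.down) (hu : u ≫ (𝟙 _ - telescopeMap Y g) = 0) :
    u = 0 := by
  obtain ⟨x, rfl⟩ := (hG _).surjective u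
  rw [coproductComparison_comp_one_sub_telescopeMap, ← map_zero (coproductComparison G _)] at hu
  rw [(injective_iff_map_eq_zero _).1
    (injective_telescopeDiff (fun i => Preadditive.rightComp G (g i))) x ((hG _).injective hu),
    map_zero]

lemma exists_comp_one_sub_telescopeMap_eq (hG : IsSmallObject G) {X : C} (f : ∀ i, Y i ⟶ X)
    (hf : ∀ i, g i ≫ f (i + 1) = f i) (hkill : ∀ i (v : G ⟶ Y i), v ≫ f i = 0 → v ≫ g i = 0)
    (u : G ⟶ ∐ fun i : ULift.{v} ℕ => Y i.down) (hu : u ≫ Sigma.desc (fun i => f i.down) = 0) :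
    ∃ u', u' ≫ (𝟙 _ - telescopeMap Y g) = u := by
  obtain ⟨x, rfl⟩ := (hG _).surjective u
  rw [coproductComparison_comp_desc] at hu
  obtain ⟨y, rfl⟩ := mem_range_telescopeDiff (fun i => Preadditive.rightComp G (g i))
    (ψ := fun i => Preadditive.rightComp G (f i)) (by simp [Preadditive.rightComp, hf]) hkill hu
  exact ⟨coproductComparison G _ y, coproductComparison_comp_one_sub_telescopeMap Y g G y⟩

end Telescope

section Pretriangulated

variable {C : Type u} [Category.{v} C] [HasShift C ℤ] [Preadditive C]
  [∀ n : ℤ, (shiftFunctor C n).Additive]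

lemma eq_zero_of_comp_shift_map_eq_zero {G W W' : C} (h : W ⟶ W')
    (hG : ∀ u : G⟦(-1 : ℤ)⟧ ⟶ W, u ≫ h = 0 → u = 0) (u : G ⟶ W⟦(1 : ℤ)⟧)
    (hu : u ≫ h⟦(1 : ℤ)⟧' = 0) : u = 0 := by
  let e := shiftFunctorCompIsoId C (1 : ℤ) (-1) (by norm_num)
  have h₀ : (u⟦(-1 : ℤ)⟧' ≫ e.hom.app W) ≫ h = 0 := by
    have hnat : e.hom.app W ≫ h = (h⟦(1 : ℤ)⟧')⟦(-1 : ℤ)⟧' ≫ e.hom.app W' :=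
      (e.hom.naturality h).symm
    rw [assoc, hnat, ← Functor.map_comp_assoc, hu, Functor.map_zero, zero_comp]
  apply (shiftFunctor C (-1 : ℤ)).map_injective
  rw [Functor.map_zero, ← cancel_mono (e.hom.app W), hG _ h₀, zero_comp]

variable [HasZeroObject C] [Pretriangulated C]

lemma bijective_comp_of_telescope {G : C} (hG : IsSmallObject G) (Y : ℕ → C)
    (g : ∀ i, Y i ⟶ Y (i + 1)) [HasCoproduct fun i : ULift.{v} ℕ => Y i.down] {X : C}
    (f : ∀ i, Y i ⟶ X) (hf : ∀ i, g i ≫ f (i + 1) = f i)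
    (hkill : ∀ i (n : ℤ) (v : G⟦n⟧ ⟶ Y i), v ≫ f i = 0 → v ≫ g i = 0)
    (hsurj : ∀ (n : ℤ) (v : G⟦n⟧ ⟶ X), ∃ u, u ≫ f 0 = v)
    {Z : C} {c : (∐ fun i : ULift.{v} ℕ => Y i.down) ⟶ Z} {δ : Z ⟶ _}
    (hT : Triangle.mk (𝟙 _ - telescopeMap Y g) c δ ∈ distTriang C) {φ : Z ⟶ X}
    (hφ : c ≫ φ = Sigma.desc fun i : ULift.{v} ℕ => f i.down) (n : ℤ) :
    Function.Bijective fun w : G⟦n⟧ ⟶ Z => w ≫ φ := by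
  have h₁₂ : (𝟙 _ - telescopeMap Y g) ≫ c = 0 := comp_distTriang_mor_zero₁₂ _ hT
  have h₃₁ : δ ≫ (𝟙 _ - telescopeMap Y g)⟦(1 : ℤ)⟧' = 0 := comp_distTriang_mor_zero₃₁ _ hT
  refine ⟨(injective_iff_map_eq_zero (Preadditive.rightComp _ φ)).2 fun w hw => ?_, fun v => ?_⟩
  · change w ≫ φ = 0 at hw
    have hwδ : w ≫ δ = 0 :=
      eq_zero_of_comp_shift_map_eq_zero _
        (eq_zero_of_comp_one_sub_telescopeMap Y g ((hG.shift n).shift (-1)))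
        _ (by rw [assoc, h₃₁, comp_zero])
    obtain ⟨u : _ ⟶ ∐ _, rfl : w = u ≫ c⟩ := Triangle.coyoneda_exact₃ _ hT w hwδ
    obtain ⟨u', rfl⟩ := exists_comp_one_sub_telescopeMap_eq Y g (hG.shift n) f hf (hkill · n) u
      (by rwa [← hφ, ← assoc])
    rw [assoc, h₁₂, comp_zero]
  · obtain ⟨u, rfl⟩ := hsurj n v
    exact ⟨u ≫ Sigma.ι (fun i : ULift.{v} ℕ => Y i.down) ⟨0⟩ ≫ c, by simp [hφ]⟩

lemma nonempty_iso_of_telescope {G : C} (hGs : IsSmallObject G) (hGg : IsWeakGenerator G)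
    (Y : ℕ → C) (g : ∀ i, Y i ⟶ Y (i + 1)) [HasCoproduct fun i : ULift.{v} ℕ => Y i.down]
    {X : C} (f : ∀ i, Y i ⟶ X) (hf : ∀ i, g i ≫ f (i + 1) = f i)
    (hkill : ∀ i (n : ℤ) (v : G⟦n⟧ ⟶ Y i), v ≫ f i = 0 → v ≫ g i = 0)
    (hsurj : ∀ (n : ℤ) (v : G⟦n⟧ ⟶ X), ∃ u, u ≫ f 0 = v)
    {Z : C} {c : (∐ fun i : ULift.{v} ℕ => Y i.down) ⟶ Z} {δ : Z ⟶ _}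
    (hT : Triangle.mk (𝟙 _ - telescopeMap Y g) c δ ∈ distTriang C) : Nonempty (Z ≅ X) := by
  obtain ⟨φ : Z ⟶ X, hφ⟩ := Triangle.yoneda_exact₂ _ hT _ (one_sub_telescopeMap_comp_desc Y g f hf)
  have := (hGg φ).2 (bijective_comp_of_telescope hGs Y g f hf hkill hsurj hT hφ.symm)
  exact ⟨asIso φ⟩

end Pretriangulated

section Localizing

variable {C : Type u} [Category.{v} C] [HasShift C ℤ] [HasCoproducts.{v} C]
  (P : ObjectProperty C) [P.IsStableUnderShift ℤ]
  [∀ ι : Type v, P.IsClosedUnderColimitsOfShape (Discrete ι)]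

lemma prop_sigma_shift {G : C} (hG : P G) {κ : Type v} (d : κ → ℤ) :
    P (∐ fun j => G⟦d j⟧) :=
  P.prop_colimit _ fun j => P.le_shift (d j.as) _ hG

variable [HasZeroObject C] [Preadditive C] [∀ n : ℤ, (shiftFunctor C n).Additive]
  [Pretriangulated C] [P.IsTriangulatedClosed₃] [P.IsClosedUnderIsomorphisms]

lemma exists_overHom_killing {G : C} (hG : P G) {X : C} (Y : Over X) (hY : P Y.left) :
    ∃ (Y' : Over X) (a : Y ⟶ Y'), P Y'.left ∧
      ∀ (n : ℤ) (v : G⟦n⟧ ⟶ Y.left), v ≫ Y.hom = 0 → v ≫ a.left = 0 := by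
  let κ := Σ n : ℤ, {v : G⟦n⟧ ⟶ Y.left // v ≫ Y.hom = 0}
  let k : (∐ fun j : κ => G⟦j.1⟧) ⟶ Y.left := Sigma.desc fun j => j.2.1
  obtain ⟨Z, a, δ, hT⟩ := distinguished_cocone_triangle k
  have hk : k ≫ Y.hom = 0 :=
    Sigma.hom_ext _ _ fun j => by simpa only [k, Sigma.ι_desc_assoc, comp_zero] using j.2.2
  have hka : k ≫ a = 0 := comp_distTriang_mor_zero₁₂ _ hT
  obtain ⟨f : Z ⟶ X, hf⟩ := Triangle.yoneda_exact₂ _ hT Y.hom hk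
  refine ⟨Over.mk f, Over.homMk a hf.symm,
    P.ext_of_isTriangulatedClosed₃ _ hT (prop_sigma_shift P hG _) hY, fun n v hv => ?_⟩
  have hv : v = Sigma.ι (fun j : κ => G⟦j.1⟧) ⟨n, v, hv⟩ ≫ k := by simp [k]
  rw [hv, assoc]
  change _ ≫ k ≫ a = 0
  rw [hka, comp_zero]

lemma exists_cellular_tower {G : C} (hG : P G) (X : C) :
    ∃ (Y : ℕ → Over X) (g : ∀ i, Y i ⟶ Y (i + 1)), (∀ i, P (Y i).left) ∧
      (∀ i (n : ℤ) (v : G⟦n⟧ ⟶ (Y i).left), v ≫ (Y i).hom = 0 → v ≫ (g i).left = 0) ∧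
      ∀ (n : ℤ) (v : G⟦n⟧ ⟶ X), ∃ u, u ≫ (Y 0).hom = v := by
  choose step a hstep hkill using fun Y : {Y : Over X // P Y.left} =>
    exists_overHom_killing P hG Y.1 Y.2
  let base : {Y : Over X // P Y.left} :=
    ⟨Over.mk (Sigma.desc fun p : Σ n : ℤ, (G⟦n⟧ ⟶ X) => p.2), prop_sigma_shift P hG _⟩
  let tower : ℕ → {Y : Over X // P Y.left} := fun i => Nat.rec base (fun _ Y => ⟨step Y, hstep Y⟩) i
  exact ⟨fun i => (tower i).1, fun i => a (tower i), fun i => (tower i).2, fun i => hkill (tower i),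
    fun n v => ⟨Sigma.ι (fun p : Σ n : ℤ, (G⟦n⟧ ⟶ X) => G⟦p.1⟧) ⟨n, v⟩, by simp [tower, base]⟩⟩

theorem prop_of_isSmallObject_of_isWeakGenerator {G : C} (hGs : IsSmallObject G)
    (hGg : IsWeakGenerator G) (hG : P G) (X : C) : P X := by
  obtain ⟨Y, g, hY, hkill, hsurj⟩ := exists_cellular_tower P hG X
  obtain ⟨Z, c, δ, hT⟩ := distinguished_cocone_triangle
    (𝟙 _ - telescopeMap (fun i => (Y i).left) fun i => (g i).left)
  have hsum : P (∐ fun i : ULift.{v} ℕ => (Y i.down).left) := P.prop_colimit _ fun i => hY _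
  obtain ⟨e⟩ := nonempty_iso_of_telescope hGs hGg _ _ (fun i => (Y i).hom) (fun i => Over.w (g i))
    hkill hsurj hT
  exact P.prop_of_iso e (P.ext_of_isTriangulatedClosed₃ _ hT hsum hsum)

end Localizing

section IsoLocus

variable {C D : Type*} [Category C] [Category D] {F₁ F₂ : C ⥤ D}

def isoLocus (τ : F₁ ⟶ F₂) : ObjectProperty C := fun X => IsIso (τ.app X)

variable (τ : F₁ ⟶ F₂)

instance : (isoLocus τ).IsClosedUnderIsomorphisms :=
  ⟨fun e => (NatTrans.isIso_app_iff_of_iso τ e).1⟩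

instance {A : Type*} [AddMonoid A] [HasShift C A] [HasShift D A] [F₁.CommShift A]
    [F₂.CommShift A] [NatTrans.CommShift τ A] : (isoLocus τ).IsStableUnderShift A where
  isStableUnderShiftBy a := ⟨fun X (_ : IsIso (τ.app X)) => by
    change IsIso (τ.app (X⟦a⟧))
    rw [NatTrans.app_shift τ a X]
    infer_instance⟩

lemma isIso_app_of_isColimit {J : Type*} [Category J] {K : J ⥤ C} {c : Cocone K}
    (hc : IsColimit c) [PreservesColimit K F₁] [PreservesColimit K F₂]
    (h : ∀ j, IsIso (τ.app (K.obj j))) : IsIso (τ.app c.pt) := by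
  have : ∀ j, IsIso ((Functor.whiskerLeft K τ).app j) := h
  have : IsIso (Functor.whiskerLeft K τ) := NatIso.isIso_of_isIso_app _
  let hc₁ := isColimitOfPreserves F₁ hc
  have : (hc₁.coconePointsIsoOfNatIso (isColimitOfPreserves F₂ hc)
      (asIso (Functor.whiskerLeft K τ))).hom = τ.app c.pt :=
    hc₁.hom_ext fun j => (hc₁.ι_map _ _ j).trans (τ.naturality _).symm
  rw [← this]
  infer_instance

instance {J : Type*} [Category J] [PreservesColimitsOfShape J F₁]
    [PreservesColimitsOfShape J F₂] : (isoLocus τ).IsClosedUnderColimitsOfShape J where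
  colimitsOfShape_le := by
    rintro _ ⟨h⟩
    exact isIso_app_of_isColimit τ h.isColimit h.prop_diag_obj

end IsoLocus

section TriangulatedFunctor

variable {C : Type*} [Category C] [HasZeroObject C] [HasShift C ℤ] [Preadditive C]
  [∀ n : ℤ, (shiftFunctor C n).Additive] [Pretriangulated C]
  {D : Type*} [Category D] [HasZeroObject D] [HasShift D ℤ] [Preadditive D]
  [∀ n : ℤ, (shiftFunctor D n).Additive] [Pretriangulated D]
  {F₁ F₂ : C ⥤ D} [F₁.CommShift ℤ] [F₂.CommShift ℤ] (τ : F₁ ⟶ F₂) [NatTrans.CommShift τ ℤ]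

def mapTriangleHom (T : Triangle C) : F₁.mapTriangle.obj T ⟶ F₂.mapTriangle.obj T where
  hom₁ := τ.app T.obj₁
  hom₂ := τ.app T.obj₂
  hom₃ := τ.app T.obj₃
  comm₁ := τ.naturality T.mor₁
  comm₂ := τ.naturality T.mor₂
  comm₃ := by
    change (F₁.map T.mor₃ ≫ (F₁.commShiftIso (1 : ℤ)).hom.app T.obj₁) ≫ (τ.app T.obj₁)⟦1⟧' =
      τ.app T.obj₃ ≫ F₂.map T.mor₃ ≫ (F₂.commShiftIso (1 : ℤ)).hom.app T.obj₁
    rw [assoc, NatTrans.shift_app_comm, τ.naturality_assoc]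

instance [F₁.IsTriangulated] [F₂.IsTriangulated] : (isoLocus τ).IsTriangulatedClosed₃ :=
  .mk' fun T hT h₁ h₂ =>
    isIso₃_of_isIso₁₂ (mapTriangleHom τ T) (F₁.map_distinguished T hT)
      (F₂.map_distinguished T hT) h₁ h₂

end TriangulatedFunctor

end Paper

theorem statement_1
    {C : Type u} [Category.{v} C] [HasZeroObject C] [HasShift C ℤ] [Preadditive C]
    [∀ n : ℤ, (shiftFunctor C n).Additive] [Pretriangulated C] [HasCoproducts.{v} C]
    {D : Type u} [Category.{v} D] [HasZeroObject D] [HasShift D ℤ] [Preadditive D]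
    [∀ n : ℤ, (shiftFunctor D n).Additive] [Pretriangulated D] [HasCoproducts.{v} D]
    (F₁ F₂ : C ⥤ D) [F₁.Additive] [F₂.Additive] [F₁.CommShift ℤ] [F₂.CommShift ℤ]
    [F₁.IsTriangulated] [F₂.IsTriangulated]
    (hF₁ : ∀ ι : Type v, PreservesColimitsOfShape (Discrete ι) F₁)
    (hF₂ : ∀ ι : Type v, PreservesColimitsOfShape (Discrete ι) F₂)
    (G : C) (hGsmall : IsSmallObject G) (hGgen : IsWeakGenerator G)
    (τ : F₁ ⟶ F₂)
    (hτshift : ∀ (n : ℤ) (X : C),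
      (F₁.commShiftIso n).hom.app X ≫ (τ.app X)⟦n⟧' =
        τ.app (X⟦n⟧) ≫ (F₂.commShiftIso n).hom.app X)
    (hτG : IsIso (τ.app G)) :
    ∀ X : C, IsIso (τ.app X) := by
  have : NatTrans.CommShift τ ℤ := ⟨fun n => by ext X; exact hτshift n X⟩
  have := hF₁
  have := hF₂
  exact prop_of_isSmallObject_of_isWeakGenerator (isoLocus τ) hGsmall hGgen hτG
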